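/- Let n ≥ 1, μ̃ ∈ ℝⁿ, let Σ̃ be a positive semidefinite n×n real matrix, and let θ > 0. Then the uncertainty set U_θ(μ̃, Σ̃) := { (μ, Σ) ∈ ℝⁿ × S₊ⁿ : ‖μ − μ̃‖₂² + B²(Σ, Σ̃) ≤ θ² } is a convex and compact subset of ℝⁿ × Sⁿ, where Sⁿ is the space of symmetric n×n real matrices and S₊ⁿ the cone of positive semidefinite matrices in Sⁿ. -/

import Mathlib

open Matrix
open scoped Classical

open Filter
open scoped Topology

set_option maxHeartbeats 2000000

/-- The positive semidefinite square root of a matrix (junk value `0` if the matrix is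
not positive semidefinite). -/
noncomputable def psdSqrt {n : ℕ} (A : Matrix (Fin n) (Fin n) ℝ) :
    Matrix (Fin n) (Fin n) ℝ :=
  if h : A.PosSemidef then
    (h.1.eigenvectorUnitary : Matrix (Fin n) (Fin n) ℝ) *
      diagonal (fun i => Real.sqrt (h.1.eigenvalues i)) *
      (star h.1.eigenvectorUnitary : Matrix (Fin n) (Fin n) ℝ)
  else 0

/-- The squared Gelbrich/Bures distance
`B²(Σ₁, Σ₂) = Tr[Σ₁ + Σ₂ − 2(Σ₁^{1/2} Σ₂ Σ₁^{1/2})^{1/2}]`. -/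
noncomputable def Bsq {n : ℕ} (S1 S2 : Matrix (Fin n) (Fin n) ℝ) : ℝ :=
  (S1 + S2 - (2 : ℝ) • psdSqrt (psdSqrt S1 * S2 * psdSqrt S1)).trace

open scoped MatrixOrder in
lemma psdSqrt_eq_cfcSqrt {n : ℕ} {A : Matrix (Fin n) (Fin n) ℝ} (h : A.PosSemidef) :
    psdSqrt A = CFC.sqrt A := by
  rw [psdSqrt, dif_pos h, CFC.sqrt_eq_cfc, cfc_nnreal_eq_real _ A, h.1.cfc_eq]
  simp [IsHermitian.cfc, Function.comp_def, max_eq_left, h.eigenvalues_nonneg]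

open scoped MatrixOrder in
lemma psdSqrt_posSemidef' {n : ℕ} {A : Matrix (Fin n) (Fin n) ℝ} (h : A.PosSemidef) :
    (psdSqrt A).PosSemidef := by
  rw [psdSqrt_eq_cfcSqrt h]; exact (CFC.sqrt_nonneg A).posSemidef

open scoped MatrixOrder in
lemma psdSqrt_mul_self' {n : ℕ} {A : Matrix (Fin n) (Fin n) ℝ} (h : A.PosSemidef) :
    psdSqrt A * psdSqrt A = A := by
  rw [psdSqrt_eq_cfcSqrt h]; exact CFC.sqrt_mul_sqrt_self A h.nonneg

open scoped MatrixOrder in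
lemma psdSqrt_unique' {n : ℕ} {A B : Matrix (Fin n) (Fin n) ℝ} (hB : B.PosSemidef)
    (h : B ^ 2 = A) : psdSqrt A = B := by
  have hA : A.PosSemidef := h ▸ hB.pow 2
  rw [psdSqrt_eq_cfcSqrt hA]
  exact CFC.sqrt_unique (by rw [← sq]; exact h) hB.nonneg

section aux
variable {n : ℕ}
local notation "Mat" => Matrix (Fin n) (Fin n) ℝ

attribute [local instance] Matrix.normedAddCommGroup Matrix.normedSpace

/-- fidelity-type functional -/
noncomputable def Ffun (A C : Mat) : ℝ := (psdSqrt (psdSqrt A * C * psdSqrt A)).trace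


open scoped MatrixOrder in
lemma psdSqrt_eq {A : Mat} (h : A.PosSemidef) : psdSqrt A = CFC.sqrt A := psdSqrt_eq_cfcSqrt h

lemma psdSqrt_posSemidef {A : Mat} (h : A.PosSemidef) : (psdSqrt A).PosSemidef := by
  exact psdSqrt_posSemidef' h

lemma psdSqrt_mul_self {A : Mat} (h : A.PosSemidef) : psdSqrt A * psdSqrt A = A := by
  exact psdSqrt_mul_self' h

lemma psdSqrt_unique {A B : Mat} (hB : B.PosSemidef) (h : B ^ 2 = A) : psdSqrt A = B := by
  exact psdSqrt_unique' hB h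

lemma psdSqrt_herm {A : Mat} (h : A.PosSemidef) : (psdSqrt A)ᵀ = psdSqrt A := by
  have := (psdSqrt_posSemidef h).1
  exact (by simpa [conjTranspose] using this : (psdSqrt A).IsSymm)

lemma dot_self_nonneg (x : Fin n → ℝ) : 0 ≤ x ⬝ᵥ x :=
  Finset.sum_nonneg fun i _ => mul_self_nonneg (x i)

lemma dot_self_eq_zero {x : Fin n → ℝ} (h : x ⬝ᵥ x = 0) : x = 0 := by
  funext i
  have h2 : ∀ j ∈ Finset.univ, (0:ℝ) ≤ x j * x j := fun j _ => mul_self_nonneg _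
  have := (Finset.sum_eq_zero_iff_of_nonneg h2).mp h i (Finset.mem_univ i)
  have := mul_self_eq_zero.mp this
  simpa using this

lemma psd_quad_eq_dot {A : Mat} (hA : A.PosSemidef) (x : Fin n → ℝ) :
    x ⬝ᵥ (A *ᵥ x) = (psdSqrt A *ᵥ x) ⬝ᵥ (psdSqrt A *ᵥ x) := by
  conv_lhs => rw [← psdSqrt_mul_self hA]
  rw [← mulVec_mulVec, dotProduct_mulVec x]
  congr 1
  conv_lhs => rw [← psdSqrt_herm hA]
  rw [vecMul_transpose]

lemma posDef_of_isUnit {A : Mat} (hA : A.PosSemidef) (h : IsUnit A.det) : A.PosDef := by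
  refine PosDef.of_dotProduct_mulVec_pos hA.1 fun x hx => ?_
  rcases lt_or_eq_of_le (hA.dotProduct_mulVec_nonneg x) with hlt | heq
  · simpa using hlt
  · exfalso
    apply hx
    have hq : x ⬝ᵥ (A *ᵥ x) = 0 := by simpa using heq.symm
    rw [psd_quad_eq_dot hA] at hq
    have h0 : psdSqrt A *ᵥ x = 0 := dot_self_eq_zero hq
    have hAx : A *ᵥ x = 0 := by
      rw [← psdSqrt_mul_self hA, ← mulVec_mulVec, h0, mulVec_zero]
    calc x = 1 *ᵥ x := (one_mulVec x).symm
      _ = (A⁻¹ * A) *ᵥ x := by rw [nonsing_inv_mul A h]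
      _ = A⁻¹ *ᵥ (A *ᵥ x) := by rw [mulVec_mulVec]
      _ = 0 := by rw [hAx, mulVec_zero]

lemma psdSqrt_posDef {A : Mat} (hA : A.PosDef) : (psdSqrt A).PosDef := by
  refine posDef_of_isUnit (psdSqrt_posSemidef hA.posSemidef) ?_
  have : (psdSqrt A).det * (psdSqrt A).det = A.det := by
    rw [← det_mul, psdSqrt_mul_self hA.posSemidef]
  have hd := hA.det_pos
  refine isUnit_iff_ne_zero.mpr fun h0 => ?_
  rw [h0, mul_zero] at this
  exact absurd this.symm (ne_of_gt hd)

lemma posDef_congr {B P : Mat} (hB : B.PosDef) (hBsymm : Bᵀ = B) (hP : P.PosDef) :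
    (B * P * B).PosDef := by
  have hpsd : (B * P * B).PosSemidef := by
    have := hP.posSemidef.conjTranspose_mul_mul_same (B := B)
    rwa [conjTranspose_eq_transpose_of_trivial, hBsymm] at this
  refine posDef_of_isUnit hpsd ?_
  rw [det_mul, det_mul]
  have h1 : B.det ≠ 0 := ne_of_gt hB.det_pos
  have h2 : P.det ≠ 0 := ne_of_gt hP.det_pos
  exact isUnit_iff_ne_zero.mpr (by positivity)

lemma psdSqrt_inv {A : Mat} (hA : A.PosDef) : psdSqrt A⁻¹ = (psdSqrt A)⁻¹ := by
  refine psdSqrt_unique (psdSqrt_posDef hA).posSemidef.inv ?_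
  rw [sq, ← Matrix.mul_inv_rev, psdSqrt_mul_self hA.posSemidef]

lemma posDef_add_smul_one {A : Mat} (hA : A.PosSemidef) {ε : ℝ} (hε : 0 < ε) :
    (A + ε • 1).PosDef := by
  refine PosDef.of_dotProduct_mulVec_pos ?_ ?_
  · show (A + ε • 1)ᴴ = A + ε • 1
    rw [conjTranspose_add, hA.1.eq, conjTranspose_smul, conjTranspose_one, star_trivial]
  · intro x hx
    have h1 : (A + ε • 1) *ᵥ x = A *ᵥ x + ε • x := by
      rw [add_mulVec, smul_mulVec, one_mulVec]
    have hst : star x = x := funext fun k => rfl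
    rw [hst, h1, dotProduct_add, dotProduct_smul, smul_eq_mul]
    have hxx : 0 < x ⬝ᵥ x := by
      rcases lt_or_eq_of_le (dot_self_nonneg x) with h | h
      · exact h
      · exact absurd (dot_self_eq_zero h.symm) hx
    have h2 := hA.dotProduct_mulVec_nonneg x
    rw [hst] at h2
    nlinarith


lemma psd_add {A B : Mat} (hA : A.PosSemidef) (hB : B.PosSemidef) : (A + B).PosSemidef := by
  refine PosSemidef.of_dotProduct_mulVec_nonneg (hA.1.add hB.1) fun x => ?_
  simp only [add_mulVec, dotProduct_add]
  exact add_nonneg (hA.dotProduct_mulVec_nonneg x) (hB.dotProduct_mulVec_nonneg x)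

lemma psd_smul {A : Mat} (hA : A.PosSemidef) {c : ℝ} (hc : 0 ≤ c) : (c • A).PosSemidef := by
  refine PosSemidef.of_dotProduct_mulVec_nonneg ?_ ?_
  · show (c • A)ᴴ = c • A
    rw [conjTranspose_smul, hA.1.eq, star_trivial]
  · intro x
    simp only [smul_mulVec, dotProduct_smul, smul_eq_mul]
    exact mul_nonneg hc (hA.dotProduct_mulVec_nonneg x)

lemma psd_diag_nonneg {A : Mat} (hA : A.PosSemidef) (i : Fin n) : 0 ≤ A i i := by
  have := hA.dotProduct_mulVec_nonneg (Pi.single i 1)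
  simpa [dotProduct, mulVec, Pi.single_apply] using this

lemma psd_trace_nonneg {A : Mat} (hA : A.PosSemidef) : 0 ≤ A.trace :=
  Finset.sum_nonneg fun i _ => psd_diag_nonneg hA i

lemma psd_symm_apply {A : Mat} (hA : A.PosSemidef) (i j : Fin n) : A i j = A j i := by
  have := hA.1
  conv_lhs => rw [← this]
  simp [conjTranspose_apply]


lemma psd_diag_le_trace {A : Mat} (hA : A.PosSemidef) (i : Fin n) : A i i ≤ A.trace :=
  Finset.single_le_sum (fun j _ => psd_diag_nonneg hA j) (Finset.mem_univ i)

lemma psd_abs_entry_le_trace {A : Mat} (hA : A.PosSemidef) (i j : Fin n) :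
    |A i j| ≤ A.trace := by
  rcases eq_or_ne i j with rfl | hij
  · rw [abs_of_nonneg (psd_diag_nonneg hA i)]; exact psd_diag_le_trace hA i
  · have key : ∀ ε : ℝ, ε = 1 ∨ ε = -1 →
        0 ≤ A i i + A j j + 2 * ε * A i j := by
      intro ε hε
      set x : Fin n → ℝ := fun k => (if k = i then 1 else 0) + ε * (if k = j then 1 else 0)
        with hx
      have h2 := hA.dotProduct_mulVec_nonneg x
      have hstar : star x = x := funext fun k => rfl
      rw [hstar] at h2
      have hmv : ∀ a, (A *ᵥ x) a = A a i + ε * A a j := by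
        intro a
        simp [hx, mulVec, dotProduct, mul_add, Finset.sum_add_distrib, mul_ite,
          Finset.mul_sum, mul_comm, mul_left_comm]
      have hterm : ∀ k, x k * (A *ᵥ x) k =
          (if k = i then A i i + ε * A i j else 0)
            + (if k = j then ε * A j i + ε * ε * A j j else 0) := by
        intro k
        rw [hmv k]
        rcases eq_or_ne k i with rfl | hki <;> rcases eq_or_ne k j with rfl | hkj <;>
          simp_all [hx] <;> ring
      have hev : x ⬝ᵥ (A *ᵥ x)
          = A i i + ε * A i j + ε * A j i + ε * ε * A j j := by
        unfold dotProduct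
        rw [Finset.sum_congr rfl fun k _ => hterm k, Finset.sum_add_distrib,
          Finset.sum_ite_eq' Finset.univ i, Finset.sum_ite_eq' Finset.univ j]
        simp
        ring
      rw [hev] at h2
      have hsym := psd_symm_apply hA i j
      rcases hε with rfl | rfl <;> nlinarith [h2]
    have h1 := key 1 (Or.inl rfl)
    have h2 := key (-1) (Or.inr rfl)
    have hii := psd_diag_le_trace hA i
    have hjj := psd_diag_le_trace hA j
    have hii0 := psd_diag_nonneg hA i
    have hjj0 := psd_diag_nonneg hA j
    rw [abs_le]; constructor <;> nlinarith

lemma trace_mul_self_eq {A : Mat} (hA : A.IsHermitian) :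
    (A * A).trace = ∑ i, ∑ j, A i j * A i j := by
  simp only [trace, diag_apply, mul_apply]
  refine Finset.sum_congr rfl fun i _ => Finset.sum_congr rfl fun j _ => ?_
  have : A j i = A i j := by conv_lhs => rw [← hA]; simp [conjTranspose_apply]
  rw [this]

lemma trace_sq_le_card_mul_trace_sq {A : Mat} (hA : A.PosSemidef) :
    A.trace ^ 2 ≤ (n : ℝ) * (A * A).trace := by
  have h1 := trace_mul_self_eq hA.1
  have h2 : ∑ i, (A i i)^2 ≤ ∑ i, ∑ j, A i j * A i j := by
    refine Finset.sum_le_sum fun i _ => ?_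
    rw [sq]
    exact Finset.single_le_sum (f := fun j => A i j * A i j)
      (fun j _ => mul_self_nonneg _) (Finset.mem_univ i)
  have h3 : A.trace ^ 2 ≤ ((Finset.univ : Finset (Fin n)).card : ℝ) * ∑ i, (A i i)^2 := by
    simpa [trace, diag_apply] using
      (sq_sum_le_card_mul_sum_sq (f := fun i => A i i) :
        (∑ i, A i i)^2 ≤ ((Finset.univ : Finset (Fin n)).card : ℝ) * ∑ i, (A i i)^2)
  rw [h1]
  refine h3.trans ?_
  rw [Finset.card_univ, Fintype.card_fin]
  exact mul_le_mul_of_nonneg_left h2 (Nat.cast_nonneg n)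

lemma trace_transpose_mul_eq (M N : Mat) :
    (Mᵀ * N).trace = ∑ i, ∑ j, M i j * N i j := by
  simp only [trace, diag_apply, mul_apply, transpose_apply]
  rw [Finset.sum_comm]

lemma psd_inner {A C : Mat} (hA : A.PosSemidef) (hC : C.PosSemidef) :
    (psdSqrt A * C * psdSqrt A).PosSemidef := by
  have := hC.conjTranspose_mul_mul_same (B := psdSqrt A)
  rwa [(psdSqrt_posSemidef hA).1.eq] at this

lemma posDef_inner {B C : Mat} (hB : B.PosDef) (hC : C.PosDef) :
    (psdSqrt B * C * psdSqrt B).PosDef :=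
  posDef_congr (psdSqrt_posDef hB) (psdSqrt_herm hB.posSemidef) hC

lemma det_isUnit_of_posDef {A : Mat} (hA : A.PosDef) : IsUnit A.det :=
  isUnit_iff_ne_zero.mpr hA.det_pos.ne'

lemma Ffun_nonneg {A C : Mat} (hA : A.PosSemidef) (hC : C.PosSemidef) : 0 ≤ Ffun A C :=
  psd_trace_nonneg (psdSqrt_posSemidef (psd_inner hA hC))

lemma key_ineq {B C Z : Mat} (hB : B.PosDef) (hC : C.PosDef) (hZ : Z.PosDef) :
    2 * Ffun B C ≤ (B * Z).trace + (C * Z⁻¹).trace := by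
  obtain ⟨SB, hSBdef⟩ : ∃ X, X = psdSqrt B := ⟨_, rfl⟩
  obtain ⟨SC, hSCdef⟩ : ∃ X, X = psdSqrt C := ⟨_, rfl⟩
  obtain ⟨SZ, hSZdef⟩ : ∃ X, X = psdSqrt Z := ⟨_, rfl⟩
  have hSBB : SB * SB = B := by rw [hSBdef]; exact psdSqrt_mul_self hB.posSemidef
  have hSCC : SC * SC = C := by rw [hSCdef]; exact psdSqrt_mul_self hC.posSemidef
  have hSZZ : SZ * SZ = Z := by rw [hSZdef]; exact psdSqrt_mul_self hZ.posSemidef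
  have hSB : SB.PosDef := hSBdef ▸ psdSqrt_posDef hB
  have hSC : SC.PosDef := hSCdef ▸ psdSqrt_posDef hC
  have hSZ : SZ.PosDef := hSZdef ▸ psdSqrt_posDef hZ
  have hSBt : SBᵀ = SB := hSBdef ▸ psdSqrt_herm hB.posSemidef
  have hSCt : SCᵀ = SC := hSCdef ▸ psdSqrt_herm hC.posSemidef
  have hSZt : SZᵀ = SZ := hSZdef ▸ psdSqrt_herm hZ.posSemidef
  obtain ⟨SW, hSWdef⟩ : ∃ X, X = SZ⁻¹ := ⟨_, rfl⟩
  have hSWt : SWᵀ = SW := by rw [hSWdef, transpose_nonsing_inv, hSZt]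
  have hSWZ : SW * SZ = 1 := by
    rw [hSWdef]; exact nonsing_inv_mul SZ (det_isUnit_of_posDef hSZ)
  have hSWW : SW * SW = Z⁻¹ := by
    rw [hSWdef, ← Matrix.mul_inv_rev, hSZZ]
  obtain ⟨P, hPdef⟩ : ∃ X, X = psdSqrt (SB * C * SB) := ⟨_, rfl⟩
  have hM : (SB * C * SB).PosDef := by rw [hSBdef]; exact posDef_inner hB hC
  have hP : P.PosDef := hPdef ▸ psdSqrt_posDef hM
  have hPP : P * P = SB * C * SB := hPdef ▸ psdSqrt_mul_self hM.posSemidef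
  have hPt : Pᵀ = P := hPdef ▸ psdSqrt_herm hM.posSemidef
  have hPu : IsUnit P.det := det_isUnit_of_posDef hP
  obtain ⟨K, hKdef⟩ : ∃ X, X = SC * SB := ⟨_, rfl⟩
  have hKt : Kᵀ = SB * SC := by rw [hKdef, transpose_mul, hSBt, hSCt]
  have hKK : Kᵀ * K = P * P := by
    rw [hKt, hKdef, hPP, mul_assoc, ← mul_assoc SC SC SB, hSCC, ← mul_assoc]
  obtain ⟨U, hUdef⟩ : ∃ X, X = K * P⁻¹ := ⟨_, rfl⟩
  have hUt : Uᵀ = P⁻¹ * Kᵀ := by rw [hUdef, transpose_mul, transpose_nonsing_inv, hPt]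
  have hUtU : Uᵀ * U = 1 := by
    rw [hUt, hUdef, mul_assoc, ← mul_assoc Kᵀ K P⁻¹, hKK, mul_assoc,
      mul_nonsing_inv P hPu, mul_one, nonsing_inv_mul P hPu]
  have hUUt : U * Uᵀ = 1 := mul_eq_one_comm.mp hUtU
  have hUK : Uᵀ * K = P := by
    rw [hUt, mul_assoc, hKK, ← mul_assoc, nonsing_inv_mul P hPu, one_mul]
  obtain ⟨N, hNdef⟩ : ∃ X, X = SW * SC * U := ⟨_, rfl⟩
  obtain ⟨Q, hQdef⟩ : ∃ X, X = SZ * SB := ⟨_, rfl⟩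
  have hNt : Nᵀ = Uᵀ * SC * SW := by
    rw [hNdef, transpose_mul, transpose_mul, hSCt, hSWt, mul_assoc]
  have hNM : Nᵀ * Q = P := by
    rw [hNt, hQdef, ← hUK, hKdef]
    simp only [mul_assoc]
    rw [← mul_assoc SW SZ SB, hSWZ, one_mul]
  have htr2 : (Qᵀ * Q).trace = (B * Z).trace := by
    have h : Qᵀ * Q = SB * Z * SB := by
      rw [hQdef, transpose_mul, hSBt, hSZt, mul_assoc, ← mul_assoc SZ SZ SB, hSZZ, ← mul_assoc]
    rw [h, trace_mul_cycle, hSBB, trace_mul_comm]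
  have htr3 : (Nᵀ * N).trace = (C * Z⁻¹).trace := by
    have h : Nᵀ * N = Uᵀ * (SC * Z⁻¹ * SC) * U := by
      rw [hNt, hNdef, ← hSWW]
      simp only [mul_assoc]
    rw [h, trace_mul_cycle, ← mul_assoc, hUUt, one_mul, trace_mul_cycle, hSCC]
  have hptw : 2 * (Nᵀ * Q).trace ≤ (Nᵀ * N).trace + (Qᵀ * Q).trace := by
    rw [trace_transpose_mul_eq, trace_transpose_mul_eq, trace_transpose_mul_eq,
      Finset.mul_sum, ← Finset.sum_add_distrib]
    refine Finset.sum_le_sum fun i _ => ?_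
    rw [Finset.mul_sum, ← Finset.sum_add_distrib]
    refine Finset.sum_le_sum fun j _ => ?_
    nlinarith [sq_nonneg (N i j - Q i j)]
  have hF : Ffun B C = P.trace := by rw [hPdef, Ffun, hSBdef]
  rw [hF]
  calc 2 * P.trace = 2 * (Nᵀ * Q).trace := by rw [hNM]
    _ ≤ (Nᵀ * N).trace + (Qᵀ * Q).trace := hptw
    _ = (C * Z⁻¹).trace + (B * Z).trace := by rw [htr2, htr3]
    _ = (B * Z).trace + (C * Z⁻¹).trace := by ring

lemma exists_exact {A C : Mat} (hA : A.PosDef) (hC : C.PosDef) :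
    ∃ Z : Mat, Z.PosDef ∧ (A * Z).trace + (C * Z⁻¹).trace = 2 * Ffun A C := by
  obtain ⟨SA, hSAdef⟩ : ∃ X, X = psdSqrt A := ⟨_, rfl⟩
  have hSAA : SA * SA = A := by rw [hSAdef]; exact psdSqrt_mul_self hA.posSemidef
  have hSA : SA.PosDef := hSAdef ▸ psdSqrt_posDef hA
  have hSAt : SAᵀ = SA := hSAdef ▸ psdSqrt_herm hA.posSemidef
  have hSAu : IsUnit SA.det := det_isUnit_of_posDef hSA
  obtain ⟨P, hPdef⟩ : ∃ X, X = psdSqrt (SA * C * SA) := ⟨_, rfl⟩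
  have hMpd : (SA * C * SA).PosDef := by rw [hSAdef]; exact posDef_inner hA hC
  have hP : P.PosDef := hPdef ▸ psdSqrt_posDef hMpd
  have hPP : P * P = SA * C * SA := hPdef ▸ psdSqrt_mul_self hMpd.posSemidef
  have hPt : Pᵀ = P := hPdef ▸ psdSqrt_herm hMpd.posSemidef
  have hPu : IsUnit P.det := det_isUnit_of_posDef hP
  have hSAinv : SA⁻¹.PosDef := hSA.inv
  have hSAinvT : (SA⁻¹)ᵀ = SA⁻¹ := by rw [transpose_nonsing_inv, hSAt]
  refine ⟨SA⁻¹ * P * SA⁻¹, ?_, ?_⟩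
  · exact posDef_congr hSAinv hSAinvT hP
  · have hZinv : (SA⁻¹ * P * SA⁻¹)⁻¹ = SA * P⁻¹ * SA := by
      rw [Matrix.mul_inv_rev, Matrix.mul_inv_rev, nonsing_inv_nonsing_inv SA hSAu, mul_assoc]
    have h1 : (A * (SA⁻¹ * P * SA⁻¹)).trace = P.trace := by
      have : A * (SA⁻¹ * P * SA⁻¹) = SA * P * SA⁻¹ := by
        rw [← hSAA]
        simp only [mul_assoc]
        rw [← mul_assoc SA SA⁻¹ _, mul_nonsing_inv SA hSAu, one_mul]
      rw [this, trace_mul_cycle, nonsing_inv_mul SA hSAu, one_mul]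
    have h2 : (C * (SA * P⁻¹ * SA)).trace = P.trace := by
      simp only [← mul_assoc]
      rw [trace_mul_cycle, ← mul_assoc SA C SA, ← hPP, mul_assoc,
        mul_nonsing_inv P hPu, mul_one]
    rw [hZinv, h1, h2]
    have hF : Ffun A C = P.trace := by rw [hPdef, Ffun, hSAdef]
    rw [hF]; ring

lemma conc_PD {A0 A1 C : Mat} (h0 : A0.PosDef) (h1 : A1.PosDef) (hC : C.PosDef)
    {a b : ℝ} (ha : 0 ≤ a) (hb : 0 ≤ b) (hab : a + b = 1) :
    a * Ffun A0 C + b * Ffun A1 C ≤ Ffun (a • A0 + b • A1) C := by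
  have hApd : (a • A0 + b • A1).PosDef := by
    refine PosDef.of_dotProduct_mulVec_pos ?_ ?_
    · show (a • A0 + b • A1)ᴴ = a • A0 + b • A1
      rw [conjTranspose_add, conjTranspose_smul, conjTranspose_smul, h0.1.eq, h1.1.eq,
        star_trivial, star_trivial]
    · intro x hx
      have e : star x ⬝ᵥ ((a • A0 + b • A1) *ᵥ x)
          = a * (star x ⬝ᵥ (A0 *ᵥ x)) + b * (star x ⬝ᵥ (A1 *ᵥ x)) := by
        rw [add_mulVec, dotProduct_add, smul_mulVec, smul_mulVec,
          dotProduct_smul, dotProduct_smul, smul_eq_mul, smul_eq_mul]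
      rw [e]
      have q0 := h0.dotProduct_mulVec_pos hx
      have q1 := h1.dotProduct_mulVec_pos hx
      rcases eq_or_lt_of_le ha with rfl | ha'
      · have hb1 : b = 1 := by linarith
        rw [hb1]; simpa using q1
      · have : 0 ≤ b * (star x ⬝ᵥ (A1 *ᵥ x)) := mul_nonneg hb (le_of_lt q1)
        nlinarith
  obtain ⟨Z, hZ, hZeq⟩ := exists_exact hApd hC
  have lin : ((a • A0 + b • A1) * Z).trace
      = a * (A0 * Z).trace + b * (A1 * Z).trace := by
    rw [add_mul, smul_mul_assoc, smul_mul_assoc, trace_add, trace_smul, trace_smul,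
      smul_eq_mul, smul_eq_mul]
  have k0 := key_ineq h0 hC hZ
  have k1 := key_ineq h1 hC hZ
  have e2 : 2 * Ffun (a • A0 + b • A1) C
      = a * ((A0 * Z).trace + (C * Z⁻¹).trace) + b * ((A1 * Z).trace + (C * Z⁻¹).trace) := by
    rw [← hZeq, lin]
    linear_combination (-(C * Z⁻¹).trace) * hab
  nlinarith [mul_le_mul_of_nonneg_left k0 ha, mul_le_mul_of_nonneg_left k1 hb]

lemma cont_entry (i j : Fin n) : Continuous fun M : Mat => M i j :=
  continuous_id.matrix_elem i j

lemma cont_trace : Continuous fun M : Mat => M.trace := by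
  simp only [trace, diag_apply]
  exact continuous_finset_sum _ fun i _ => cont_entry i i

lemma cont_mul2 : Continuous fun p : Mat × Mat => p.1 * p.2 := by
  apply continuous_matrix
  intro i j
  simp only [mul_apply]
  exact continuous_finset_sum _ fun k _ =>
    ((continuous_fst.matrix_elem i k).mul (continuous_snd.matrix_elem k j))

lemma cont_quad (x : Fin n → ℝ) : Continuous fun M : Mat => x ⬝ᵥ (M *ᵥ x) := by
  simp only [dotProduct, mulVec]
  exact continuous_finset_sum _ fun i _ => (continuous_const.mul
    (continuous_finset_sum _ fun j _ => ((cont_entry i j).mul continuous_const)))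

lemma tendsto_entry {A : ℕ → Mat} {L : Mat} (hL : Tendsto A atTop (𝓝 L)) (i j : Fin n) :
    Tendsto (fun k => A k i j) atTop (𝓝 (L i j)) :=
  ((cont_entry i j).tendsto L).comp hL

lemma posSemidef_of_tendsto {A : ℕ → Mat} {L : Mat} (hA : ∀ k, (A k).PosSemidef)
    (hL : Tendsto A atTop (𝓝 L)) : L.PosSemidef := by
  refine PosSemidef.of_dotProduct_mulVec_nonneg ?_ ?_
  · show Lᴴ = L
    ext i j
    have h1 : Lᴴ i j = L j i := by simp [conjTranspose_apply]
    rw [h1]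
    have h2 : (fun k => A k j i) = fun k => A k i j :=
      funext fun k => psd_symm_apply (hA k) j i
    exact tendsto_nhds_unique (h2 ▸ tendsto_entry hL j i) (tendsto_entry hL i j)
  · intro x
    have hst : star x = x := funext fun k => rfl
    rw [hst]
    have ht : Tendsto (fun k => x ⬝ᵥ (A k *ᵥ x)) atTop (𝓝 (x ⬝ᵥ (L *ᵥ x))) :=
      ((cont_quad x).tendsto L).comp hL
    refine ge_of_tendsto ht (Filter.Eventually.of_forall fun k => ?_)
    have := (hA k).dotProduct_mulVec_nonneg x
    rwa [hst] at this

lemma tendsto_psdSqrt_seq {A : ℕ → Mat} {L : Mat} (hA : ∀ k, (A k).PosSemidef)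
    (hL : Tendsto A atTop (𝓝 L)) :
    Tendsto (fun k => psdSqrt (A k)) atTop (𝓝 (psdSqrt L)) := by
  have hLpsd : L.PosSemidef := posSemidef_of_tendsto hA hL
  have htr : Tendsto (fun k => (A k).trace) atTop (𝓝 L.trace) :=
    (cont_trace.tendsto L).comp hL
  obtain ⟨T, hT⟩ : ∃ T, ∀ k, (A k).trace ≤ T := by
    obtain ⟨T, hT⟩ := htr.bddAbove_range
    exact ⟨T, fun k => hT (Set.mem_range_self k)⟩
  have hT0 : 0 ≤ T := le_trans (psd_trace_nonneg (hA 0)) (hT 0)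
  set R : ℝ := ((n : ℝ) * T + 1) / 2 with hRdef
  have hR0 : 0 ≤ R := by positivity
  have hball : ∀ k, psdSqrt (A k) ∈ Metric.closedBall (0 : Mat) R := by
    intro k
    rw [Metric.mem_closedBall, dist_zero_right]
    have hpsd := psdSqrt_posSemidef (hA k)
    have htrk : (psdSqrt (A k)).trace ≤ R := by
      have h1 := trace_sq_le_card_mul_trace_sq hpsd
      rw [psdSqrt_mul_self (hA k)] at h1
      have h2 : (A k).trace ≤ T := hT k
      have h3 : (0:ℝ) ≤ (psdSqrt (A k)).trace := psd_trace_nonneg hpsd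
      have h4 : (n : ℝ) ≤ (n : ℝ) := le_refl _
      have h5 : ((n:ℝ)) * (A k).trace ≤ (n:ℝ) * T :=
        mul_le_mul_of_nonneg_left h2 (Nat.cast_nonneg n)
      nlinarith [sq_nonneg ((psdSqrt (A k)).trace - 1)]
    rw [Matrix.norm_le_iff hR0]
    intro i j
    rw [Real.norm_eq_abs]
    exact le_trans (psd_abs_entry_le_trace hpsd i j) htrk
  apply tendsto_of_subseq_tendsto
  intro ns hns
  obtain ⟨B, _, φ, hφ, hφt⟩ :=
    (isCompact_closedBall (0 : Mat) R).tendsto_subseq (fun m => hball (ns m))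
  refine ⟨φ, ?_⟩
  have hsub : Tendsto (fun m => A (ns (φ m))) atTop (𝓝 L) :=
    hL.comp (hns.comp hφ.tendsto_atTop)
  have hBpsd : B.PosSemidef :=
    posSemidef_of_tendsto (fun m => psdSqrt_posSemidef (hA (ns (φ m)))) hφt
  have hBB : B * B = L := by
    have h1 : Tendsto (fun m => psdSqrt (A (ns (φ m))) * psdSqrt (A (ns (φ m)))) atTop
        (𝓝 (B * B)) := (cont_mul2.tendsto (B, B)).comp (hφt.prodMk_nhds hφt)
    have h2 : (fun m => psdSqrt (A (ns (φ m))) * psdSqrt (A (ns (φ m))))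
        = fun m => A (ns (φ m)) := funext fun m => psdSqrt_mul_self (hA _)
    rw [h2] at h1
    exact tendsto_nhds_unique h1 hsub
  have hfin : psdSqrt L = B := psdSqrt_unique hBpsd (by rw [sq, hBB])
  rwa [hfin]

lemma tendsto_Ffun {A C : ℕ → Mat} {LA LC : Mat}
    (hA : ∀ k, (A k).PosSemidef) (hC : ∀ k, (C k).PosSemidef)
    (hLA : Tendsto A atTop (𝓝 LA)) (hLC : Tendsto C atTop (𝓝 LC)) :
    Tendsto (fun k => Ffun (A k) (C k)) atTop (𝓝 (Ffun LA LC)) := by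
  have h1 := tendsto_psdSqrt_seq hA hLA
  have h2 : Tendsto (fun k => psdSqrt (A k) * C k * psdSqrt (A k)) atTop
      (𝓝 (psdSqrt LA * LC * psdSqrt LA)) := by
    have ha : Tendsto (fun k => psdSqrt (A k) * C k) atTop (𝓝 (psdSqrt LA * LC)) :=
      (cont_mul2.tendsto (psdSqrt LA, LC)).comp (h1.prodMk_nhds hLC)
    exact (cont_mul2.tendsto (psdSqrt LA * LC, psdSqrt LA)).comp (ha.prodMk_nhds h1)
  have h3 := tendsto_psdSqrt_seq (fun k => psd_inner (hA k) (hC k)) h2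
  exact (cont_trace.tendsto _).comp h3

lemma psd_one : (1 : Mat).PosSemidef := Matrix.PosSemidef.one

lemma Ffun_sq_le {A C : Mat} (hA : A.PosSemidef) (hC : C.PosSemidef) :
    (Ffun A C) ^ 2 ≤ (n:ℝ)^3 * (A.trace * C.trace) := by
  have hG : (psdSqrt A * C * psdSqrt A).PosSemidef := psd_inner hA hC
  have h1 : (Ffun A C)^2 ≤ (n:ℝ) * (A * C).trace := by
    have h2 := trace_sq_le_card_mul_trace_sq (psdSqrt_posSemidef hG)
    rw [psdSqrt_mul_self hG] at h2
    have h3 : (psdSqrt A * C * psdSqrt A).trace = (A * C).trace := by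
      rw [trace_mul_cycle, psdSqrt_mul_self hA]
    rw [h3] at h2
    exact h2
  have h4 : (A * C).trace ≤ (n:ℝ)^2 * (A.trace * C.trace) := by
    have : (A * C).trace = ∑ i, ∑ j, A i j * C j i := by
      simp only [trace, diag_apply, mul_apply]
    rw [this]
    have hb : ∀ i j : Fin n, A i j * C j i ≤ A.trace * C.trace := by
      intro i j
      have h5 := psd_abs_entry_le_trace hA i j
      have h6 := psd_abs_entry_le_trace hC j i
      have h7 : |A i j * C j i| ≤ A.trace * C.trace := by
        rw [abs_mul]
        exact mul_le_mul h5 h6 (abs_nonneg _) (le_trans (abs_nonneg _) h5)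
      exact le_trans (le_abs_self _) h7
    calc ∑ i, ∑ j, A i j * C j i ≤ ∑ i : Fin n, ∑ j : Fin n, A.trace * C.trace :=
          Finset.sum_le_sum fun i _ => Finset.sum_le_sum fun j _ => hb i j
      _ = (n:ℝ)^2 * (A.trace * C.trace) := by
          simp [Finset.sum_const, Finset.card_univ]
          ring
  have hn0 : (0:ℝ) ≤ (n:ℝ) := Nat.cast_nonneg n
  calc (Ffun A C)^2 ≤ (n:ℝ) * (A * C).trace := h1
    _ ≤ (n:ℝ) * ((n:ℝ)^2 * (A.trace * C.trace)) := mul_le_mul_of_nonneg_left h4 hn0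
    _ = (n:ℝ)^3 * (A.trace * C.trace) := by ring

lemma Ffun_le {A C : Mat} (hA : A.PosSemidef) (hC : C.PosSemidef) :
    Ffun A C ≤ A.trace / 4 + (n:ℝ)^3 * C.trace := by
  have h1 := Ffun_sq_le hA hC
  have h2 := Ffun_nonneg hA hC
  have hta := psd_trace_nonneg hA
  have htc := psd_trace_nonneg hC
  have hn0 : (0:ℝ) ≤ (n:ℝ)^3 := by positivity
  nlinarith [sq_nonneg (A.trace / 4 - (n:ℝ)^3 * C.trace),
    sq_nonneg (A.trace / 4 + (n:ℝ)^3 * C.trace), mul_nonneg hn0 htc]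

lemma Bsq_eq (A C : Mat) : Bsq A C = A.trace + C.trace - 2 * Ffun A C := by
  rw [Bsq, trace_sub, trace_add, trace_smul, Ffun]
  simp [smul_eq_mul]

lemma conc_PSD {A0 A1 C : Mat} (h0 : A0.PosSemidef) (h1 : A1.PosSemidef)
    (hC : C.PosSemidef) {a b : ℝ} (ha : 0 ≤ a) (hb : 0 ≤ b) (hab : a + b = 1) :
    a * Ffun A0 C + b * Ffun A1 C ≤ Ffun (a • A0 + b • A1) C := by
  set ε : ℕ → ℝ := fun k => 1 / (k + 1) with hεdef
  have hε : ∀ k, 0 < ε k := fun k => by positivity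
  have hεt : Tendsto ε atTop (𝓝 0) := tendsto_one_div_add_atTop_nhds_zero_nat
  have hcomb : ∀ e : ℝ, a • (A0 + e • (1:Mat)) + b • (A1 + e • (1:Mat))
      = (a • A0 + b • A1) + e • (1:Mat) := by
    intro e
    rw [smul_add, smul_add, smul_smul, smul_smul,
      show a * e = a * e from rfl]
    rw [show (e : ℝ) • (1:Mat) = ((a*e) + (b*e)) • (1:Mat) from by
      rw [show (a*e) + (b*e) = (a+b)*e from by ring, hab, one_mul], add_smul]
    abel
  have hkey : ∀ k, a * Ffun (A0 + ε k • 1) (C + ε k • 1)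
      + b * Ffun (A1 + ε k • 1) (C + ε k • 1)
      ≤ Ffun ((a • A0 + b • A1) + ε k • 1) (C + ε k • 1) := by
    intro k
    have := conc_PD (posDef_add_smul_one h0 (hε k)) (posDef_add_smul_one h1 (hε k))
      (posDef_add_smul_one hC (hε k)) ha hb hab
    rwa [hcomb (ε k)] at this
  have htend1 : ∀ (D : Mat), Tendsto (fun k => D + ε k • (1:Mat)) atTop (𝓝 D) := by
    intro D
    have h2 : Tendsto (fun k => ε k • (1:Mat)) atTop (𝓝 ((0:ℝ) • (1:Mat))) :=
      hεt.smul_const 1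
    rw [zero_smul] at h2
    have h3 := Filter.Tendsto.add (tendsto_const_nhds : Tendsto (fun _ : ℕ => D) atTop (𝓝 D)) h2
    simpa using h3
  have hpsd : ∀ (D : Mat), D.PosSemidef → ∀ k, (D + ε k • (1:Mat)).PosSemidef :=
    fun D hD k => (posDef_add_smul_one hD (hε k)).posSemidef
  have hlhs : Tendsto (fun k => a * Ffun (A0 + ε k • 1) (C + ε k • 1)
      + b * Ffun (A1 + ε k • 1) (C + ε k • 1)) atTop
      (𝓝 (a * Ffun A0 C + b * Ffun A1 C)) := by
    have t0 := tendsto_Ffun (hpsd A0 h0) (hpsd C hC) (htend1 A0) (htend1 C)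
    have t1 := tendsto_Ffun (hpsd A1 h1) (hpsd C hC) (htend1 A1) (htend1 C)
    exact ((tendsto_const_nhds.mul t0).add (tendsto_const_nhds.mul t1))
  have hrhs : Tendsto (fun k => Ffun ((a • A0 + b • A1) + ε k • 1) (C + ε k • 1)) atTop
      (𝓝 (Ffun (a • A0 + b • A1) C)) := by
    have hS : (a • A0 + b • A1).PosSemidef := psd_add (psd_smul h0 ha) (psd_smul h1 hb)
    exact tendsto_Ffun (hpsd _ hS) (hpsd C hC) (htend1 _) (htend1 C)
  exact le_of_tendsto_of_tendsto' hlhs hrhs hkey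

lemma Bsq_convex {A0 A1 C : Mat} (h0 : A0.PosSemidef) (h1 : A1.PosSemidef)
    (hC : C.PosSemidef) {a b : ℝ} (ha : 0 ≤ a) (hb : 0 ≤ b) (hab : a + b = 1) :
    Bsq (a • A0 + b • A1) C ≤ a * Bsq A0 C + b * Bsq A1 C := by
  rw [Bsq_eq, Bsq_eq, Bsq_eq]
  have htr : (a • A0 + b • A1).trace = a * A0.trace + b * A1.trace := by
    rw [trace_add, trace_smul, trace_smul, smul_eq_mul, smul_eq_mul]
  have hconc := conc_PSD h0 h1 hC ha hb hab
  rw [htr]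
  have : C.trace = (a + b) * C.trace := by rw [hab, one_mul]
  nlinarith [hconc]

lemma set_convex (muT : Fin n → ℝ) (SigT : Mat) (hSigT : SigT.PosSemidef) (θ : ℝ) :
    Convex ℝ {p : (Fin n → ℝ) × Mat |
      p.2.PosSemidef ∧ (∑ i, (p.1 i - muT i) ^ 2) + Bsq p.2 SigT ≤ θ ^ 2} := by
  intro p hp q hq a b ha hb hab
  obtain ⟨hp1, hp2⟩ := hp
  obtain ⟨hq1, hq2⟩ := hq
  have hsnd : (a • p + b • q).2 = a • p.2 + b • q.2 := rfl
  have hfst : (a • p + b • q).1 = a • p.1 + b • q.1 := rfl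
  constructor
  · rw [hsnd]; exact psd_add (psd_smul hp1 ha) (psd_smul hq1 hb)
  · rw [hsnd, hfst]
    have hsum : ∑ i, ((a • p.1 + b • q.1) i - muT i) ^ 2
        ≤ a * ∑ i, (p.1 i - muT i) ^ 2 + b * ∑ i, (q.1 i - muT i) ^ 2 := by
      rw [Finset.mul_sum, Finset.mul_sum, ← Finset.sum_add_distrib]
      refine Finset.sum_le_sum fun i _ => ?_
      have hcoord : (a • p.1 + b • q.1) i - muT i
          = a * (p.1 i - muT i) + b * (q.1 i - muT i) := by
        simp only [Pi.add_apply, Pi.smul_apply, smul_eq_mul]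
        linear_combination (muT i) * hab
      rw [hcoord]
      nlinarith [mul_nonneg (mul_nonneg ha hb) (sq_nonneg ((p.1 i - muT i) - (q.1 i - muT i)))]
    have hBsq := Bsq_convex hp1 hq1 hSigT ha hb hab
    nlinarith [hp2, hq2, mul_le_mul_of_nonneg_left hp2 ha, mul_le_mul_of_nonneg_left hq2 hb]

lemma set_closed (muT : Fin n → ℝ) (SigT : Mat) (hSigT : SigT.PosSemidef) (θ : ℝ) :
    IsClosed {p : (Fin n → ℝ) × Mat |
      p.2.PosSemidef ∧ (∑ i, (p.1 i - muT i) ^ 2) + Bsq p.2 SigT ≤ θ ^ 2} := by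
  have : FirstCountableTopology Mat :=
    inferInstanceAs (FirstCountableTopology (Fin n → Fin n → ℝ))
  apply IsSeqClosed.isClosed
  intro pseq p hmem htend
  have h1 : Tendsto (fun k => (pseq k).1) atTop (𝓝 p.1) :=
    ((continuous_fst.tendsto p).comp htend)
  have h2 : Tendsto (fun k => (pseq k).2) atTop (𝓝 p.2) :=
    ((continuous_snd.tendsto p).comp htend)
  have hpsd : p.2.PosSemidef := posSemidef_of_tendsto (fun k => (hmem k).1) h2
  refine ⟨hpsd, ?_⟩
  have hsum : Tendsto (fun k => ∑ i, ((pseq k).1 i - muT i) ^ 2) atTop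
      (𝓝 (∑ i, (p.1 i - muT i) ^ 2)) := by
    have hcont : Continuous fun x : Fin n → ℝ => ∑ i, (x i - muT i) ^ 2 :=
      continuous_finset_sum _ fun i _ => ((continuous_apply i).sub continuous_const).pow 2
    exact (hcont.tendsto p.1).comp h1
  have hB : Tendsto (fun k => Bsq (pseq k).2 SigT) atTop (𝓝 (Bsq p.2 SigT)) := by
    have hfe : (fun k => Bsq (pseq k).2 SigT)
        = fun k => (pseq k).2.trace + SigT.trace - 2 * Ffun (pseq k).2 SigT :=
      funext fun k => Bsq_eq _ _
    rw [hfe, Bsq_eq]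
    have hFt : Tendsto (fun k => Ffun (pseq k).2 SigT) atTop (𝓝 (Ffun p.2 SigT)) :=
      tendsto_Ffun (fun k => (hmem k).1) (fun _ => hSigT) h2 tendsto_const_nhds
    exact (((cont_trace.tendsto p.2).comp h2).add tendsto_const_nhds).sub
      (tendsto_const_nhds.mul hFt)
  exact le_of_tendsto (hsum.add hB) (Filter.Eventually.of_forall fun k => (hmem k).2)

lemma set_compact (muT : Fin n → ℝ) (SigT : Mat) (hSigT : SigT.PosSemidef)
    (θ : ℝ) (hθ : 0 < θ) :
    IsCompact {p : (Fin n → ℝ) × Mat |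
      p.2.PosSemidef ∧ (∑ i, (p.1 i - muT i) ^ 2) + Bsq p.2 SigT ≤ θ ^ 2} := by
  set c := SigT.trace with hcdef
  have hc0 : 0 ≤ c := psd_trace_nonneg hSigT
  set S0 : ℝ := θ ^ 2 + 2 * (n:ℝ)^3 * c with hS0def
  set T0 : ℝ := 2 * θ ^ 2 + 4 * (n:ℝ)^3 * c with hT0def
  have hn3 : (0:ℝ) ≤ (n:ℝ)^3 := by positivity
  have hS00 : 0 ≤ S0 := by positivity
  have hT00 : 0 ≤ T0 := by positivity
  set R1 : ℝ := ‖muT‖ + Real.sqrt S0 with hR1def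
  have hR10 : 0 ≤ R1 := add_nonneg (norm_nonneg _) (Real.sqrt_nonneg _)
  have hbounds : ∀ p : (Fin n → ℝ) × Mat,
      p.2.PosSemidef → (∑ i, (p.1 i - muT i) ^ 2) + Bsq p.2 SigT ≤ θ ^ 2 →
      (∀ i, (p.1 i - muT i)^2 ≤ S0) ∧ p.2.trace ≤ T0 := by
    intro p hpsd hineq
    have hF := Ffun_le hpsd hSigT
    have hB : Bsq p.2 SigT ≥ p.2.trace / 2 + c - 2 * (n:ℝ)^3 * c := by
      rw [Bsq_eq]; linarith
    have hs0 : 0 ≤ ∑ i, (p.1 i - muT i) ^ 2 :=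
      Finset.sum_nonneg fun i _ => sq_nonneg _
    have ht0 : 0 ≤ p.2.trace := psd_trace_nonneg hpsd
    constructor
    · intro i
      have hle : (p.1 i - muT i)^2 ≤ ∑ j, (p.1 j - muT j) ^ 2 :=
        Finset.single_le_sum (f := fun j => (p.1 j - muT j)^2)
          (fun j _ => sq_nonneg _) (Finset.mem_univ i)
      linarith
    · linarith
  have hsubset : {p : (Fin n → ℝ) × Mat |
      p.2.PosSemidef ∧ (∑ i, (p.1 i - muT i) ^ 2) + Bsq p.2 SigT ≤ θ ^ 2}
      ⊆ (Metric.closedBall (0 : Fin n → ℝ) R1) ×ˢ (Metric.closedBall (0 : Mat) T0) := by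
    rintro p ⟨hpsd, hineq⟩
    obtain ⟨hs, ht⟩ := hbounds p hpsd hineq
    constructor
    · rw [Metric.mem_closedBall, dist_zero_right]
      rw [pi_norm_le_iff_of_nonneg hR10]
      intro i
      rw [Real.norm_eq_abs]
      have h1 : |p.1 i - muT i| ≤ Real.sqrt S0 := by
        rw [← Real.sqrt_sq_eq_abs]
        exact Real.sqrt_le_sqrt (hs i)
      have h2 : |muT i| ≤ ‖muT‖ := by
        have := norm_le_pi_norm muT i
        rwa [Real.norm_eq_abs] at this
      calc |p.1 i| = |(p.1 i - muT i) + muT i| := by ring_nf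
        _ ≤ |p.1 i - muT i| + |muT i| := abs_add_le _ _
        _ ≤ R1 := by rw [hR1def]; linarith
    · rw [Metric.mem_closedBall, dist_zero_right, Matrix.norm_le_iff hT00]
      intro i j
      rw [Real.norm_eq_abs]
      exact le_trans (psd_abs_entry_le_trace hpsd i j) ht
  have hK : IsCompact ((Metric.closedBall (0 : Fin n → ℝ) R1)
      ×ˢ (Metric.closedBall (0 : Mat) T0)) :=
    (isCompact_closedBall _ _).prod (isCompact_closedBall _ _)
  exact hK.of_isClosed_subset (set_closed muT SigT hSigT θ) hsubset

end aux

/-- the uncertainty set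
`U_θ(μ̃, Σ̃) = {(μ, Σ) : Σ ⪰ 0, ‖μ − μ̃‖₂² + B²(Σ, Σ̃) ≤ θ²}` is convex and compact. -/
theorem uncertainty_set_convex_compact
    (n : ℕ) (hn : 1 ≤ n) (muT : Fin n → ℝ) (SigT : Matrix (Fin n) (Fin n) ℝ)
    (hSigT : SigT.PosSemidef) (θ : ℝ) (hθ : 0 < θ) :
    Convex ℝ {p : (Fin n → ℝ) × Matrix (Fin n) (Fin n) ℝ |
        p.2.PosSemidef ∧ (∑ i, (p.1 i - muT i) ^ 2) + Bsq p.2 SigT ≤ θ ^ 2} ∧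
      IsCompact {p : (Fin n → ℝ) × Matrix (Fin n) (Fin n) ℝ |
        p.2.PosSemidef ∧ (∑ i, (p.1 i - muT i) ^ 2) + Bsq p.2 SigT ≤ θ ^ 2} := by
  exact ⟨set_convex muT SigT hSigT θ, set_compact muT SigT hSigT θ hθ⟩
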